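/- Let p : U → (ℝⁿ →ₗ[ℝ] ℝⁿ →ₗ[ℝ] ℝ) be a smooth pairing with p x nondegenerate for every x ∈ U, and let A⁺, A⁻ : U → (ℝⁿ →ₗ[ℝ] ℝⁿ →ₗ[ℝ] ℝⁿ) be smooth connection forms that are mutually dual with respect to p. Then R_{A⁺}(x)(v,w) = 0 for all x ∈ U and v, w ∈ ℝⁿ if and only if R_{A⁻}(x)(v,w) = 0 for all x ∈ U and v, w ∈ ℝⁿ; i.e. A⁺ is curvature-free iff A⁻ is curvature-free. (Paper's Corollary 3.18, in a trivialization.) -/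

import Mathlib

noncomputable section

open Set

/-- ℝⁿ. -/
abbrev Vn (n : ℕ) : Type := Fin n → ℝ

/-- Pairings (fiber metrics pairing `E⁺` with `E⁻`) on the trivialized bundle. -/
abbrev Pairn (n : ℕ) : Type := Vn n →L[ℝ] Vn n →L[ℝ] ℝ

/-- Connection forms on the trivialized bundle. -/
abbrev Connn (n : ℕ) : Type := Vn n →L[ℝ] Vn n →L[ℝ] Vn n

/-- Bundle maps `TU → E±` in the trivialization. -/
abbrev Bdln (n : ℕ) : Type := Vn n →L[ℝ] Vn n

/-- Covariant derivative of the section `ν` along the vector field `X`,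
for the connection with connection form `A`. -/
def cov {n : ℕ} (A : Vn n → Connn n) (X ν : Vn n → Vn n) (x : Vn n) : Vn n :=
  fderiv ℝ ν x (X x) + A x (X x) (ν x)

/-- Lie bracket of vector fields on an open set of ℝⁿ. -/
def lieB {n : ℕ} (X Y : Vn n → Vn n) (x : Vn n) : Vn n :=
  fderiv ℝ Y x (X x) - fderiv ℝ X x (Y x)

/-- The section `Φ±Y : x ↦ Φ± x (Y x)`. -/
def secPhi {n : ℕ} (Φ : Vn n → Bdln n) (Y : Vn n → Vn n) : Vn n → Vn n :=
  fun x => Φ x (Y x)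

/-- The induced (possibly degenerate) metric `h x y z = 2 p x (Φ⁺ x y) (Φ⁻ x z)`. -/
def hmet {n : ℕ} (p : Vn n → Pairn n) (Φp Φm : Vn n → Bdln n) (x y z : Vn n) : ℝ :=
  2 * p x (Φp x y) (Φm x z)

/-- The generalized Amari–Chentsov cubic tensor. -/
def Ctensor {n : ℕ} (p : Vn n → Pairn n) (Ap Am : Vn n → Connn n)
    (Φp Φm : Vn n → Bdln n) (X Y Z : Vn n → Vn n) (x : Vn n) : ℝ :=
  -2 * (p x (cov Ap X (secPhi Φp Y) x) (Φm x (Z x))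
        - p x (Φp x (Z x)) (cov Am X (secPhi Φm Y) x))

/-- The relative torsion `T(X,Y) = ∇_X(ΦY) − ∇_Y(ΦX) − Φ[X,Y]`. -/
def Ttor {n : ℕ} (A : Vn n → Connn n) (Φ : Vn n → Bdln n)
    (X Y : Vn n → Vn n) (x : Vn n) : Vn n :=
  cov A X (secPhi Φ Y) x - cov A Y (secPhi Φ X) x - Φ x (lieB X Y x)

/-- The Kossowski pseudo-connection. -/
def Koss {n : ℕ} (p : Vn n → Pairn n) (Φp Φm : Vn n → Bdln n)
    (X Y Z : Vn n → Vn n) (x : Vn n) : ℝ :=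
  fderiv ℝ (fun y => p y (Φp y (Y y)) (Φm y (Z y))) x (X x)
  + fderiv ℝ (fun y => p y (Φp y (Z y)) (Φm y (X y))) x (Y x)
  - fderiv ℝ (fun y => p y (Φp y (X y)) (Φm y (Y y))) x (Z x)
  - p x (Φp x (X x)) (Φm x (lieB Y Z x))
  + p x (Φp x (Y x)) (Φm x (lieB Z X x))
  + p x (Φp x (Z x)) (Φm x (lieB X Y x))

/-- The curvature of a connection form `A` at `x` in directions `v`, `w`. -/
def curvA {n : ℕ} (A : Vn n → Connn n) (x v w : Vn n) : Vn n →L[ℝ] Vn n :=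
  fderiv ℝ A x v w - fderiv ℝ A x w v + (A x v).comp (A x w) - (A x w).comp (A x v)

/-! Differentiating the duality identity `∂_v p(a, b) = p(A⁺_v a, b) + p(a, A⁻_v b)` a second
time and antisymmetrizing in the two directions, the symmetry of second derivatives gives
`p(R⁺(v, w) a, b) + p(a, R⁻(v, w) b) = 0`: up to sign the two curvatures are adjoint with
respect to `p`, so by nondegeneracy one vanishes exactly when the other does. -/

open Filter Topology

section

variable {E V W : Type*} [NormedAddCommGroup E] [NormedSpace ℝ E]
  [NormedAddCommGroup V] [NormedSpace ℝ V] [NormedAddCommGroup W] [NormedSpace ℝ W]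

theorem fderiv_clm_apply_apply_const {p : E → V →L[ℝ] W →L[ℝ] ℝ} {y : E}
    (hp : DifferentiableAt ℝ p y) (a : V) (b : W) (v : E) :
    fderiv ℝ (fun y => p y a b) y v = fderiv ℝ p y v a b := by
  rw [((hp.hasFDerivAt.clm_apply (hasFDerivAt_const a y)).clm_apply
    (hasFDerivAt_const b y)).fderiv]
  simp only [ContinuousLinearMap.comp_zero, zero_add, ContinuousLinearMap.flip_apply]

theorem fderiv_fderiv_clm_apply_apply_of_dual {p : E → V →L[ℝ] W →L[ℝ] ℝ}
    {Ap : E → E →L[ℝ] V →L[ℝ] V} {Am : E → E →L[ℝ] W →L[ℝ] W} {x : E}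
    (hp : ContDiffAt ℝ 2 p x) (hAp : DifferentiableAt ℝ Ap x) (hAm : DifferentiableAt ℝ Am x)
    (hdual : ∀ᶠ y in 𝓝 x, ∀ v a b, fderiv ℝ p y v a b = p y (Ap y v a) b + p y a (Am y v b))
    (a : V) (b : W) (v w : E) :
    fderiv ℝ (fderiv ℝ fun y => p y a b) x w v =
      p x (Ap x w (Ap x v a)) b + p x (Ap x v a) (Am x w b) + p x (fderiv ℝ Ap x w v a) b
      + p x (Ap x w a) (Am x v b) + p x a (Am x w (Am x v b)) + p x a (fderiv ℝ Am x w v b) := by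
  have hg : ContDiffAt ℝ 2 (fun y => p y a b) x :=
    (hp.clm_apply contDiffAt_const).clm_apply contDiffAt_const
  have hg' : DifferentiableAt ℝ (fderiv ℝ fun y => p y a b) x :=
    (hg.fderiv_right (m := 1) le_rfl).differentiableAt one_ne_zero
  have hloc : (fun y => fderiv ℝ (fun y => p y a b) y v) =ᶠ[𝓝 x]
      fun y => p y (Ap y v a) b + p y a (Am y v b) := by
    filter_upwards [hdual, hp.eventually (by simp)] with y hdual_y hp_y
    rw [fderiv_clm_apply_apply_const (hp_y.differentiableAt two_ne_zero), hdual_y]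
  have hp' := (hp.differentiableAt two_ne_zero).hasFDerivAt
  have hrhs := ((hp'.clm_apply ((hAp.hasFDerivAt.clm_apply (hasFDerivAt_const v x)).clm_apply
      (hasFDerivAt_const a x))).clm_apply (hasFDerivAt_const b x)).add
    ((hp'.clm_apply (hasFDerivAt_const a x)).clm_apply
      ((hAm.hasFDerivAt.clm_apply (hasFDerivAt_const v x)).clm_apply (hasFDerivAt_const b x)))
  have hderiv := congrArg (· w) (hloc.fderiv_eq.trans hrhs.fderiv)
  rw [fderiv_clm_apply hg' (differentiableAt_const v)] at hderiv
  simp only [fderiv_fun_const, Pi.zero_apply, ContinuousLinearMap.comp_zero, zero_add,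
    ContinuousLinearMap.flip_apply, ContinuousLinearMap.flip_add, add_apply,
    ContinuousLinearMap.comp_apply] at hderiv
  rw [hderiv, hdual.self_of_nhds, hdual.self_of_nhds]
  ring

end

theorem eq_zero_of_pairing_add_eq_zero {𝕜 V W : Type*} [NontriviallyNormedField 𝕜]
    [NormedAddCommGroup V] [NormedSpace 𝕜 V] [NormedAddCommGroup W] [NormedSpace 𝕜 W]
    {B : V →L[𝕜] W →L[𝕜] 𝕜} (hB : ∀ b, (∀ a, B a b = 0) → b = 0)
    {T : V →L[𝕜] V} {S : W →L[𝕜] W} (h : ∀ a b, B (T a) b + B a (S b) = 0) (hT : T = 0) :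
    S = 0 := by
  ext1 b
  exact hB _ fun a => by simpa [hT] using h a b

theorem pairing_curvA_add_pairing_curvA_eq_zero {n : ℕ} {p : Vn n → Pairn n}
    {Ap Am : Vn n → Connn n} {x : Vn n} (hp : ContDiffAt ℝ 2 p x) (hAp : DifferentiableAt ℝ Ap x)
    (hAm : DifferentiableAt ℝ Am x)
    (hdual : ∀ᶠ y in 𝓝 x, ∀ v a b, fderiv ℝ p y v a b = p y (Ap y v a) b + p y a (Am y v b))
    (v w a b : Vn n) :
    p x (curvA Ap x v w a) b + p x a (curvA Am x v w b) = 0 := by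
  have hsymm : IsSymmSndFDerivAt ℝ (fun y => p y a b) x :=
    ((hp.clm_apply contDiffAt_const).clm_apply contDiffAt_const).isSymmSndFDerivAt (by simp)
  have hvw := fderiv_fderiv_clm_apply_apply_of_dual hp hAp hAm hdual a b v w
  have hwv := fderiv_fderiv_clm_apply_apply_of_dual hp hAp hAm hdual a b w v
  rw [hsymm w v] at hvw
  simp only [curvA, sub_apply, add_apply, ContinuousLinearMap.comp_apply, map_sub, map_add]
  linarith

/-- Paper's Corollary 3.18 (in a trivialization): for a nondegenerate smooth pairing
`p` and mutually dual smooth connection forms `A⁺`, `A⁻`, the connection `A⁺` is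
curvature-free on `U` if and only if `A⁻` is curvature-free on `U`. -/
theorem statement12 {n : ℕ} (U : Set (Vn n)) (hUopen : IsOpen U)
    (p : Vn n → Pairn n) (hpsmooth : ContDiffOn ℝ (⊤ : ℕ∞) p U)
    (hpnondeg : ∀ x ∈ U, ∀ a : Vn n, (∀ b : Vn n, p x a b = 0) → a = 0)
    (hpnondeg' : ∀ x ∈ U, ∀ b : Vn n, (∀ a : Vn n, p x a b = 0) → b = 0)
    (Ap Am : Vn n → Connn n)
    (hApsmooth : ContDiffOn ℝ (⊤ : ℕ∞) Ap U) (hAmsmooth : ContDiffOn ℝ (⊤ : ℕ∞) Am U)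
    (hdual : ∀ x ∈ U, ∀ v a b : Vn n,
      fderiv ℝ p x v a b = p x (Ap x v a) b + p x a (Am x v b)) :
    (∀ x ∈ U, ∀ v w : Vn n, curvA Ap x v w = 0) ↔
    (∀ x ∈ U, ∀ v w : Vn n, curvA Am x v w = 0) := by
  have key : ∀ x ∈ U, ∀ v w a b,
      p x (curvA Ap x v w a) b + p x a (curvA Am x v w b) = 0 := fun x hx =>
    have hU : U ∈ 𝓝 x := hUopen.mem_nhds hx
    pairing_curvA_add_pairing_curvA_eq_zero
      ((hpsmooth.contDiffAt hU).of_le (WithTop.coe_le_coe.mpr le_top))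
      ((hApsmooth.contDiffAt hU).differentiableAt (by simp))
      ((hAmsmooth.contDiffAt hU).differentiableAt (by simp)) (eventually_of_mem hU hdual)
  refine ⟨fun h x hx v w => ?_, fun h x hx v w => ?_⟩
  · exact eq_zero_of_pairing_add_eq_zero (hpnondeg' x hx) (key x hx v w) (h x hx v w)
  · refine eq_zero_of_pairing_add_eq_zero (B := (p x).flip) (hpnondeg x hx) (fun b a => ?_)
      (h x hx v w)
    simpa only [ContinuousLinearMap.flip_apply, add_comm] using key x hx v w a b
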